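/- Let T_{n;c}(x) = T_n(x) + c·T_{n−1}(x) with T_m the Chebyshev polynomial of the first kind. For n ≥ 2 and constants s, t with t ≠ 0: Res(T_{n;s}, T_{n−1;t}) = (−1)^{n(n+1)/2} · 2^{n²−3n+3} · t^n · T_{n;s}(−(1+st)/(2t)). -/

import Mathlib

/-!
At a root `a` of `f = T_n + s T_{n-1}` the recurrence `T_{n-2} = 2x T_{n-1} - T_n` gives
`T_{n-1}(a) + t T_{n-2}(a) = 2t (a - r) T_{n-1}(a)` with `r = -(1 + st)/(2t)`. Hence the resultant
factors as `Res(f, X - r) · Res(f, T_{n-1})` up to powers of `2t` and of the leading coefficient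
of `f`. The first factor is `± f(r)`; the second reduces, since `f ≡ T_n` modulo `T_{n-1}`, to
`Res(T_{n-1}, T_n)`, which `T_{m+2} ≡ -T_m` modulo `T_{m+1}` turns into a one-step recurrence.
-/

open Polynomial Polynomial.Chebyshev

/-- The resultant: `Res f g = lc(f)^(deg g) * ∏_{α root of f} g(α)`. -/
noncomputable def Res (f g : Polynomial ℂ) : ℂ :=
  f.leadingCoeff ^ g.natDegree * (f.roots.map (fun a => g.eval a)).prod

theorem Res_eq_resultant (f g : ℂ[X]) : Res f g = resultant f g :=
  (resultant_eq_prod_eval f g _ le_rfl (IsAlgClosed.splits f)).symm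

theorem Res_comm (f g : ℂ[X]) : Res f g = (-1) ^ (f.natDegree * g.natDegree) * Res g f := by
  simp only [Res_eq_resultant]
  exact resultant_comm f g _ _

theorem Res_C_right (f : ℂ[X]) (c : ℂ) : Res f (C c) = c ^ f.natDegree := by
  simp [Res, IsAlgClosed.card_roots_eq_natDegree]

theorem Res_X_sub_C_right (f : ℂ[X]) (r : ℂ) :
    Res f (X - C r) = (-1) ^ f.natDegree * f.eval r := by
  rw [Res_eq_resultant, natDegree_X_sub_C]
  exact resultant_X_sub_C_right f _ r le_rfl

theorem Res_mul_right (f : ℂ[X]) {g h : ℂ[X]} (hg : g ≠ 0) (hh : h ≠ 0) :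
    Res f (g * h) = Res f g * Res f h := by
  simp only [Res, natDegree_mul hg hh, eval_mul, Multiset.prod_map_mul]
  ring

theorem leadingCoeff_pow_mul_Res_congr_right {f g h : ℂ[X]}
    (H : ∀ a ∈ f.roots, g.eval a = h.eval a) :
    f.leadingCoeff ^ h.natDegree * Res f g = f.leadingCoeff ^ g.natDegree * Res f h := by
  simp only [Res, Multiset.map_congr rfl H]
  ring

theorem Res_congr_right {f g h : ℂ[X]} (H : ∀ a ∈ f.roots, g.eval a = h.eval a)
    (hgh : g.natDegree = h.natDegree) : Res f g = Res f h := by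
  simp only [Res, Multiset.map_congr rfl H, hgh]

theorem neg_one_pow_triangle_succ {R : Type*} [Monoid R] [HasDistribNeg R] (k : ℕ) :
    (-1 : R) ^ ((k + 1) * (k + 2) / 2) = (-1) ^ (k + 1) * (-1) ^ (k * (k + 1) / 2) := by
  rw [← pow_add, show (k + 1) * (k + 2) = k * (k + 1) + 2 * (k + 1) by ring,
    Nat.add_mul_div_left _ _ two_pos, add_comm]

section Chebyshev

variable {R : Type*} [CommRing R] [IsDomain R] [NeZero (2 : R)]

theorem natDegree_T_natCast_add_one (k : ℕ) : (T R (k + 1)).natDegree = k + 1 := by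
  rw [natDegree_T]
  omega

theorem degree_C_mul_T_lt (k : ℕ) (c : R) : (C c * T R k).degree < (T R (k + 1)).degree := by
  calc (C c * T R k).degree ≤ (T R k).degree := by
        simpa [smul_eq_C_mul] using degree_smul_le c (T R k)
    _ < (T R (k + 1)).degree := by simp only [degree_T]; norm_cast; omega

theorem natDegree_T_add_C_mul_T (k : ℕ) (c : R) :
    (T R (k + 1) + C c * T R k).natDegree = k + 1 := by
  rw [natDegree_add_eq_left_of_degree_lt (degree_C_mul_T_lt k c), natDegree_T_natCast_add_one]

theorem leadingCoeff_T_add_C_mul_T (k : ℕ) (c : R) :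
    (T R (k + 1) + C c * T R k).leadingCoeff = 2 ^ k := by
  rw [leadingCoeff_add_of_degree_lt' (degree_C_mul_T_lt k c), leadingCoeff_T]
  congr

end Chebyshev

theorem eval_T_add_C_mul_T_of_isRoot {K : Type*} [Field K] [NeZero (2 : K)] {k : ℤ} {s t a : K}
    (ht : t ≠ 0) (ha : (T K (k + 2) + C s * T K (k + 1)).eval a = 0) :
    (T K (k + 1) + C t * T K k).eval a =
      (C (2 * t : K) * ((X - C (-(1 + s * t) / (2 * t) : K)) * T K (k + 1))).eval a := by
  have hT : T K k = 2 * X * T K (k + 1) - T K (k + 2) := by rw [T_add_two]; ring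
  have hr : 2 * t * (-(1 + s * t) / (2 * t)) = -(1 + s * t) := by field_simp
  simp only [eval_add, eval_mul, eval_C] at ha
  simp only [hT, eval_add, eval_mul, eval_sub, eval_C, eval_X, eval_ofNat]
  linear_combination (-t) * ha + (T K (k + 1)).eval a * hr

theorem Res_T_T_add_one_succ (m : ℕ) :
    Res (T ℂ (m + 1)) (T ℂ (m + 2)) =
      (-1) ^ (m + 1) * 2 ^ (2 * m) * Res (T ℂ m) (T ℂ (m + 1)) := by
  have hroots :
      ∀ a ∈ (T ℂ (m + 1)).roots, (T ℂ (m + 2)).eval a = (C (-1) * T ℂ m).eval a := by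
    intro a ha
    simp [T_add_two, (isRoot_of_mem_roots ha).eq_zero]
  have h := leadingCoeff_pow_mul_Res_congr_right hroots
  rw [Res_mul_right _ (by simp) (T_ne_zero _ _), Res_C_right,
    Res_comm (T ℂ (m + 1)) (T ℂ m)] at h
  have e1 : ((m : ℤ) + 1).natAbs = m + 1 := by omega
  have e2 : ((m : ℤ) + 2).natAbs = m + 2 := by omega
  simp only [natDegree_C_mul (by norm_num : (-1 : ℂ) ≠ 0), natDegree_T, leadingCoeff_T, e1, e2,
    Int.natAbs_natCast, Nat.add_sub_cancel] at h
  rw [mul_comm (m + 1), (Nat.even_mul_succ_self m).neg_one_pow, one_mul] at h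
  refine mul_left_cancel₀ (pow_ne_zero m (pow_ne_zero m two_ne_zero)) (h.trans ?_)
  ring

theorem Res_T_add_one_T_add_two (m : ℕ) :
    Res (T ℂ (m + 1)) (T ℂ (m + 2)) = (-1) ^ ((m + 1) * (m + 2) / 2) * 2 ^ (m * (m + 1)) := by
  induction m with
  | zero =>
    have h := Res_T_T_add_one_succ 0
    simp only [Nat.cast_zero, zero_add] at h ⊢
    rw [h]
    simp [Res]
  | succ m ih =>
    have h := Res_T_T_add_one_succ (m + 1)
    have e1 : ((m + 1 : ℕ) : ℤ) + 1 = m + 2 := by push_cast; ring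
    have e2 : ((m + 1 : ℕ) : ℤ) + 2 = m + 3 := by push_cast; ring
    rw [e1, e2, Nat.cast_succ] at h
    rw [e1, e2, h, ih, neg_one_pow_triangle_succ (m + 1)]
    ring

theorem Res_T_add_C_mul_T (k : ℕ) (s : ℂ) {t : ℂ} (ht : t ≠ 0) :
    Res (T ℂ (k + 2) + C s * T ℂ (k + 1)) (T ℂ (k + 1) + C t * T ℂ k) =
      (-1) ^ ((k + 2) * (k + 3) / 2) * 2 ^ (k ^ 2 + k + 1) * t ^ (k + 2) *
        (T ℂ (k + 2) + C s * T ℂ (k + 1)).eval (-(1 + s * t) / (2 * t)) := by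
  set f := T ℂ (k + 2) + C s * T ℂ (k + 1)
  set r := -(1 + s * t) / (2 * t)
  have hfdeg : f.natDegree = k + 2 := by
    simpa only [Nat.cast_add, Nat.cast_one, add_assoc, one_add_one_eq_two] using
      natDegree_T_add_C_mul_T (k + 1) s
  have hflc : f.leadingCoeff = 2 ^ (k + 1) := by
    simpa only [Nat.cast_add, Nat.cast_one, add_assoc, one_add_one_eq_two] using
      leadingCoeff_T_add_C_mul_T (k + 1) s
  have hTdeg := natDegree_T_natCast_add_one (R := ℂ) k
  have hRes_T : Res f (T ℂ (k + 1)) = (-1) ^ ((k + 1) * (k + 2) / 2) * 2 ^ (k * (k + 1)) := by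
    have hroots : ∀ a ∈ (T ℂ (k + 1)).roots, f.eval a = (T ℂ (k + 2)).eval a := by
      intro a ha
      simp [f, (isRoot_of_mem_roots ha).eq_zero]
    have hsign : Even ((k + 2) * (k + 1)) := by rw [mul_comm]; exact Nat.even_mul_succ_self (k + 1)
    rw [Res_comm, Res_congr_right hroots (by rw [hfdeg, natDegree_T]; omega),
      Res_T_add_one_T_add_two, hfdeg, hTdeg, hsign.neg_one_pow, one_mul]
  have hfactor := leadingCoeff_pow_mul_Res_congr_right fun a ha =>
    eval_T_add_C_mul_T_of_isRoot (k := k) (s := s) ht (isRoot_of_mem_roots ha)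
  rw [Res_mul_right _ (by simpa using ht) (mul_ne_zero (X_sub_C_ne_zero r) (T_ne_zero _ _)),
    Res_mul_right _ (X_sub_C_ne_zero r) (T_ne_zero _ _), Res_C_right, Res_X_sub_C_right, hRes_T,
    natDegree_C_mul (by simpa using ht), natDegree_mul (X_sub_C_ne_zero r) (T_ne_zero _ _),
    natDegree_X_sub_C, natDegree_T_add_C_mul_T, hfdeg, hflc, hTdeg] at hfactor
  have hsign : (-1 : ℂ) ^ ((k + 2) * (k + 3) / 2) =
      (-1) ^ (k + 2) * (-1) ^ ((k + 1) * (k + 2) / 2) :=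
    neg_one_pow_triangle_succ (k + 1)
  refine mul_left_cancel₀ (pow_ne_zero _ (pow_ne_zero _ two_ne_zero)) (hfactor.trans ?_)
  rw [hsign]
  ring

theorem stmt_8 (n : ℕ) (hn : 2 ≤ n) (s t : ℂ) (ht : t ≠ 0) :
    Res (T ℂ n + C s * T ℂ ((n : ℤ) - 1)) (T ℂ ((n : ℤ) - 1) + C t * T ℂ ((n : ℤ) - 2)) =
      (-1) ^ (n * (n + 1) / 2) * 2 ^ (n ^ 2 + 3 - 3 * n) * t ^ n *
        (T ℂ n + C s * T ℂ ((n : ℤ) - 1)).eval (-(1 + s * t) / (2 * t)) := by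
  obtain ⟨k, rfl⟩ : ∃ k, n = k + 2 := ⟨n - 2, by omega⟩
  have h2 : (k + 2) ^ 2 + 3 - 3 * (k + 2) = k ^ 2 + k + 1 := by
    have : (k + 2) ^ 2 = k ^ 2 + 4 * k + 4 := by ring
    omega
  have e1 : ((k + 2 : ℕ) : ℤ) - 1 = k + 1 := by push_cast; ring
  have e2 : ((k + 2 : ℕ) : ℤ) - 2 = k := by push_cast; ring
  rw [e1, e2, h2, Nat.cast_add, Nat.cast_two]
  exact Res_T_add_C_mul_T k s ht
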